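/- Let (W_t)_{t≥0} be a standard one-dimensional Brownian motion and let p, q > 0. For α ∈ ℝ set V_t(α) = ∫₀ᵗ e^{2α W_s} ds. Then, as t → ∞, the ℝ³-valued random vectors (1/√t)·( (1/2)·log V_t(p) , (1/2)·log V_t(−q) , W_t ) converge in distribution to the law of the random vector ( p·max{W_s : 0 ≤ s ≤ 1} , −q·min{W_s : 0 ≤ s ≤ 1} , W₁ ). (This is the key reduction of the central limit theorem for driftless Brownian motion on Sol(p,q), obtained after the Dambis–Dubins–Schwarz time-change, since V_t(p) and V_t(−q) are the quadratic variations of the first two coordinates.) -/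

import Mathlib

/-!
Brownian scaling: with `x u = W (u T) / √T`, again a standard Brownian motion,
`½ log V_T(α) / √T = log T / (2√T) + α · λ⁻¹ log ∫₀¹ e^{λ x u} du` for `λ = 2α√T`.
The right-hand side is, on continuous paths, a limit of measurable functions of the samples
`x (k/n)` (Riemann sums), so its law is the same for every Brownian motion; hence the statistic
at time `T` has the law of the same functional of `W` itself. For a fixed continuous path the
Laplace principle `λ⁻¹ log ∫₀¹ e^{λ x} → max x` (`λ → ∞`), `→ min x` (`λ → -∞`) gives pointwise
convergence, and dominated convergence concludes.
-/

open MeasureTheory ProbabilityTheory Filter Real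

/-- `W` is a standard one-dimensional Brownian motion under `P`: measurable in each time,
almost surely continuous with `W₀ = 0`, Gaussian increments `W_t − W_s ∼ N(0, t−s)`,
and independent increments over consecutive time intervals. -/
def IsStandardBrownianMotion {Ω : Type*} [MeasurableSpace Ω] (P : Measure Ω)
    (W : ℝ → Ω → ℝ) : Prop :=
  (∀ t : ℝ, Measurable (W t)) ∧
  (∀ᵐ ω ∂P, W 0 ω = 0 ∧ Continuous fun t => W t ω) ∧
  (∀ s t : ℝ, 0 ≤ s → s < t →
    Measure.map (fun ω => W t ω - W s ω) P = gaussianReal 0 ((t - s).toNNReal)) ∧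
  (∀ (n : ℕ) (ts : ℕ → ℝ), Monotone ts → (0 ≤ ts 0) →
    iIndepFun
      (fun i : Fin n => fun ω => W (ts (i + 1)) ω - W (ts i) ω) P)

/-- `V_t(α) = ∫₀ᵗ e^{2α W_s} ds`, the quadratic variation arising in the
Dambis–Dubins–Schwarz reduction of driftless Brownian motion on `Sol(p,q)`. -/
noncomputable def quadVar {Ω : Type*} (W : ℝ → Ω → ℝ) (α t : ℝ) (ω : Ω) : ℝ :=
  ∫ s in (0:ℝ)..t, Real.exp (2 * α * W s ω)

open Set Topology

theorem tendsto_riemannSum_integral {g : ℝ → ℝ} (hg : ContinuousOn g (Icc 0 1)) :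
    Tendsto (fun n : ℕ => (∑ k ∈ Finset.range n, g (k / n)) / n) atTop
      (𝓝 (∫ s in (0:ℝ)..1, g s)) := by
  rw [Metric.tendsto_atTop]
  intro ε hε
  -- Compare the sum with `∫₀ⁿ g (v / n) dv = n ∫₀¹ g` on each unit interval.
  obtain ⟨δ, hδ, hgδ⟩ := Metric.uniformContinuousOn_iff.1
    (isCompact_Icc.uniformContinuousOn_of_continuous hg) (ε / 2) (half_pos hε)
  obtain ⟨N, hN⟩ := exists_nat_one_div_lt hδ
  refine ⟨N + 1, fun n hn => ?_⟩
  have hn : (0:ℝ) < n := by exact_mod_cast (by omega : 0 < n)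
  have hmesh : 1 / (n:ℝ) < δ := lt_of_le_of_lt (one_div_le_one_div_of_le (by positivity)
    (by exact_mod_cast (by omega : N + 1 ≤ n))) hN
  have hclose : ∀ i ∈ Ico 0 n, ∀ v ∈ Ico (i:ℝ) ↑(i + 1), |g (v / n) - g (i / n)| < ε / 2 := by
    intro i hi v hv
    have hi' : (i:ℝ) + 1 ≤ n := by exact_mod_cast hi.2
    push_cast at hv
    have hv0 : (0:ℝ) ≤ v := (Nat.cast_nonneg i).trans hv.1
    refine hgδ _ ⟨by positivity, ?_⟩ _ ⟨by positivity, ?_⟩ ?_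
    · rw [div_le_one hn]; linarith [hv.2]
    · rw [div_le_one hn]; linarith [hv.1]
    · rw [Real.dist_eq, ← sub_div, abs_of_nonneg (div_nonneg (by linarith [hv.1]) hn.le),
        div_lt_iff₀ hn]
      rw [div_lt_iff₀ hn] at hmesh
      linarith [hv.2]
  have hint : IntegrableOn (fun v => g (v / n)) (Ico (0:ℕ) n) := by
    refine (ContinuousOn.integrableOn_Icc ?_).mono_set Ico_subset_Icc_self
    refine hg.comp (continuousOn_id.div_const _) fun v hv => ⟨?_, ?_⟩
    · exact div_nonneg (by simpa using hv.1) hn.le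
    · rw [div_le_one hn]; simpa using hv.2
  have hscale : ∫ v in ((0:ℕ):ℝ)..n, g (v / n) = n * ∫ s in (0:ℝ)..1, g s := by
    rw [intervalIntegral.integral_comp_div _ hn.ne']
    simp [hn.ne']
  have hlow := sum_Ico_le_integral_of_le (f := fun i => g (i / n) - ε / 2) (Nat.zero_le n)
    (fun i hi v hv => by linarith [(abs_lt.1 (hclose i hi v hv)).1]) hint
  have hup := integral_le_sum_Ico_of_le (f := fun i => g (i / n) + ε / 2) (Nat.zero_le n)
    (fun i hi v hv => by linarith [(abs_lt.1 (hclose i hi v hv)).2]) hint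
  rw [hscale, Finset.sum_sub_distrib] at hlow
  rw [hscale, Finset.sum_add_distrib] at hup
  simp only [Finset.sum_const, Finset.card_range, ← Finset.range_eq_Ico, nsmul_eq_mul] at hlow hup
  rw [Real.dist_eq, abs_sub_lt_iff, div_sub' hn.ne', sub_div' hn.ne', div_lt_iff₀ hn,
    div_lt_iff₀ hn]
  constructor <;> nlinarith

noncomputable def softMax (l : ℝ) (x : ℝ → ℝ) : ℝ :=
  log (∫ u in (0:ℝ)..1, exp (l * x u)) / l

lemma integral_exp_mul_pos {x : ℝ → ℝ} (hx : ContinuousOn x (Icc 0 1)) (l : ℝ) :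
    0 < ∫ u in (0:ℝ)..1, exp (l * x u) :=
  intervalIntegral.intervalIntegral_pos_of_pos_on
    ((continuous_exp.comp_continuousOn (hx.const_smul l)).intervalIntegrable_of_Icc zero_le_one)
    (fun _ _ => exp_pos _) zero_lt_one

lemma integral_exp_mul_le {x : ℝ → ℝ} (hx : ContinuousOn x (Icc 0 1)) {l : ℝ} (hl : 0 ≤ l) :
    ∫ u in (0:ℝ)..1, exp (l * x u) ≤ exp (l * sSup (x '' Icc 0 1)) := by
  have hbdd := isCompact_Icc.bddAbove_image hx
  simpa using intervalIntegral.integral_mono_on (μ := volume) zero_le_one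
    ((continuous_exp.comp_continuousOn (hx.const_smul l)).intervalIntegrable_of_Icc zero_le_one)
    intervalIntegrable_const fun u hu =>
      exp_le_exp.2 (mul_le_mul_of_nonneg_left (le_csSup hbdd (mem_image_of_mem x hu)) hl)

lemma exists_mul_exp_le_integral_exp_mul {x : ℝ → ℝ} (hx : Continuous x) {m : ℝ}
    (hm : m < sSup (x '' Icc 0 1)) :
    ∃ c > 0, ∀ l, 0 ≤ l → c * exp (l * m) ≤ ∫ u in (0:ℝ)..1, exp (l * x u) := by
  set S := Ioo 0 1 ∩ x ⁻¹' Ioi m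
  have hS : S.Nonempty := by
    obtain ⟨_, ⟨u, hu, rfl⟩, hmu⟩ := exists_lt_of_lt_csSup ((nonempty_Icc.2 zero_le_one).image x) hm
    rw [← closure_Ioo zero_ne_one] at hu
    exact (mem_closure_iff.1 hu _ (isOpen_Ioi.preimage hx) hmu).imp fun v hv => ⟨hv.2, hv.1⟩
  have hSopen : IsOpen S := isOpen_Ioo.inter (isOpen_Ioi.preimage hx)
  have hSmeas : MeasurableSet S := hSopen.measurableSet
  refine ⟨volume.real S, ENNReal.toReal_pos (hSopen.measure_pos volume hS).ne'
    ((measure_mono inter_subset_left).trans_lt measure_Ioo_lt_top).ne, fun l hl => ?_⟩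
  have hint : IntegrableOn (fun u => exp (l * x u)) (Ioc 0 1) :=
    (continuous_exp.comp (hx.const_smul l)).integrableOn_Icc.mono_set Ioc_subset_Icc_self
  calc volume.real S * exp (l * m) = ∫ _ in S, exp (l * m) := by
        rw [setIntegral_const, smul_eq_mul]
    _ ≤ ∫ u in S, exp (l * x u) :=
        setIntegral_mono_on (integrableOn_const ((measure_mono inter_subset_left).trans_lt
          measure_Ioo_lt_top).ne) (hint.mono_set (inter_subset_left.trans Ioo_subset_Ioc_self))
          hSmeas fun u hu => exp_le_exp.2 (mul_le_mul_of_nonneg_left (le_of_lt hu.2) hl)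
    _ ≤ ∫ u in Ioc 0 1, exp (l * x u) :=
        setIntegral_mono_set hint (.of_forall fun _ => (exp_pos _).le)
          (inter_subset_left.trans Ioo_subset_Ioc_self).eventuallyLE
    _ = ∫ u in (0:ℝ)..1, exp (l * x u) := (intervalIntegral.integral_of_le zero_le_one).symm

theorem tendsto_softMax_atTop {x : ℝ → ℝ} (hx : Continuous x) :
    Tendsto (fun l => softMax l x) atTop (𝓝 (sSup (x '' Icc 0 1))) := by
  refine tendsto_order.2 ⟨fun a ha => ?_, fun b hb => ?_⟩
  · obtain ⟨m, ham, hm⟩ := exists_between ha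
    obtain ⟨c, hc, hcI⟩ := exists_mul_exp_le_integral_exp_mul hx hm
    have hlog : Tendsto (fun l => log c / l) atTop (𝓝 0) := tendsto_const_nhds.div_atTop tendsto_id
    filter_upwards [hlog.eventually (lt_mem_nhds (sub_neg.2 ham)), eventually_gt_atTop 0]
      with l hl hl0
    calc a < log c / l + m := by linarith
      _ = log (c * exp (l * m)) / l := by
        rw [log_mul hc.ne' (exp_pos _).ne', log_exp]; field_simp
      _ ≤ softMax l x :=
        div_le_div_of_nonneg_right (log_le_log (by positivity) (hcI l hl0.le)) hl0.le
  · filter_upwards [eventually_gt_atTop 0] with l hl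
    calc softMax l x ≤ log (exp (l * sSup (x '' Icc 0 1))) / l :=
          div_le_div_of_nonneg_right (log_le_log (integral_exp_mul_pos hx.continuousOn l)
            (integral_exp_mul_le hx.continuousOn hl.le)) hl.le
      _ < b := by rwa [log_exp, mul_div_cancel_left₀ _ hl.ne']

theorem tendsto_softMax_atBot {x : ℝ → ℝ} (hx : Continuous x) :
    Tendsto (fun l => softMax l x) atBot (𝓝 (sInf (x '' Icc 0 1))) := by
  have hneg : sSup ((-x) '' Icc 0 1) = -sInf (x '' Icc 0 1) := by
    rw [show -x = Neg.neg ∘ x from rfl, image_comp, image_neg_eq_neg, Real.sSup_neg]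
  have h := ((tendsto_softMax_atTop hx.neg).comp tendsto_neg_atBot_atTop).neg
  rw [hneg, neg_neg] at h
  refine h.congr fun l => ?_
  simp [softMax, div_neg]

noncomputable def gridSample (n : ℕ) (x : ℝ → ℝ) : Fin (n + 1) → ℝ := fun k => x (k / n)

/-- Stands in for measurability on path space, about which the definition of Brownian motion
says nothing: the law of such a functional is fixed by the finite-dimensional distributions. -/
def IsGridLimit {E : Type*} [TopologicalSpace E] [MeasurableSpace E] (Φ : (ℝ → ℝ) → E) :
    Prop :=
  ∃ Φn : ∀ n : ℕ, (Fin (n + 1) → ℝ) → E, (∀ n, Measurable (Φn n)) ∧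
    ∀ x, Continuous x → Tendsto (fun n => Φn n (gridSample n x)) atTop (𝓝 (Φ x))

section IsGridLimit

variable {E F : Type*} [TopologicalSpace E] [MeasurableSpace E] [TopologicalSpace F]
  [MeasurableSpace F]

lemma isGridLimit_eval_one : IsGridLimit fun x : ℝ → ℝ => x 1 := by
  refine ⟨fun n c => c (Fin.last n), fun n => measurable_pi_apply _, fun x _ => ?_⟩
  refine tendsto_const_nhds.congr' ?_
  filter_upwards [eventually_gt_atTop 0] with n hn
  simp [gridSample, hn.ne']

lemma isGridLimit_integral_comp {g : ℝ → ℝ} (hg : Continuous g) :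
    IsGridLimit fun x => ∫ u in (0:ℝ)..1, g (x u) := by
  refine ⟨fun n c => (∑ k : Fin n, g (c k.castSucc)) / n,
    fun n => (Finset.measurable_sum _ fun k _ =>
      hg.measurable.comp (measurable_pi_apply _)).div_const _,
    fun x hx => ?_⟩
  refine (tendsto_riemannSum_integral (hg.comp hx).continuousOn).congr fun n => ?_
  simp [gridSample, ← Fin.sum_univ_eq_sum_range (fun k => g (x (k / n))) n]

lemma IsGridLimit.prodMk {Φ : (ℝ → ℝ) → E} {Ψ : (ℝ → ℝ) → F} (hΦ : IsGridLimit Φ)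
    (hΨ : IsGridLimit Ψ) : IsGridLimit fun x => (Φ x, Ψ x) := by
  obtain ⟨Φn, hΦm, hΦ⟩ := hΦ
  obtain ⟨Ψn, hΨm, hΨ⟩ := hΨ
  exact ⟨fun n c => (Φn n c, Ψn n c), fun n => (hΦm n).prodMk (hΨm n),
    fun x hx => (hΦ x hx).prodMk_nhds (hΨ x hx)⟩

lemma IsGridLimit.comp {Φ : (ℝ → ℝ) → E} {h : E → F} (hΦ : IsGridLimit Φ) (hm : Measurable h)
    (hc : ∀ x, Continuous x → ContinuousAt h (Φ x)) : IsGridLimit (h ∘ Φ) := by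
  obtain ⟨Φn, hΦm, hΦ⟩ := hΦ
  exact ⟨fun n => h ∘ Φn n, fun n => hm.comp (hΦm n), fun x hx => (hc x hx).tendsto.comp (hΦ x hx)⟩

lemma IsGridLimit.comp_continuous {Φ : (ℝ → ℝ) → E} {h : E → F} (hΦ : IsGridLimit Φ)
    [OpensMeasurableSpace E] [BorelSpace F] (hh : Continuous h) : IsGridLimit (h ∘ Φ) :=
  hΦ.comp hh.measurable fun _ _ => hh.continuousAt

lemma isGridLimit_softMax (l : ℝ) : IsGridLimit (softMax l) :=
  (isGridLimit_integral_comp (continuous_const.mul continuous_id).rexp).comp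
    (measurable_log.div_const l) fun _ hx =>
      (continuousAt_log (integral_exp_mul_pos hx.continuousOn l).ne').div_const l

end IsGridLimit

noncomputable def pathRescale (T : ℝ) (x : ℝ → ℝ) : ℝ → ℝ := fun u => x (u * T) / √T

lemma measurable_partialSum {M : Type*} [AddMonoid M] [MeasurableSpace M] [MeasurableAdd₂ M]
    (n : ℕ) : Measurable (Fin.partialSum : (Fin n → M) → Fin (n + 1) → M) :=
  measurable_pi_lambda _ fun i => Fin.inductionOn i (by simp [measurable_const]) fun i hi => by
    simp only [Fin.partialSum_succ]
    exact hi.add (measurable_pi_apply i)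

namespace IsStandardBrownianMotion

variable {Ω Ω' : Type*} [MeasurableSpace Ω] [MeasurableSpace Ω'] {P : Measure Ω} {Q : Measure Ω'}
  {W X : ℝ → Ω → ℝ} {Y : ℝ → Ω' → ℝ}

theorem map_gridSample (hW : IsStandardBrownianMotion P W) (n : ℕ) :
    P.map (fun ω => gridSample n (W · ω))
      = (Measure.pi fun _ : Fin n => gaussianReal 0 ((n : ℝ)⁻¹).toNNReal).map Fin.partialSum := by
  obtain ⟨hmeas, hae, hinc, hind⟩ := hW
  set ts : ℕ → ℝ := fun k => k / n
  have hts : Monotone ts := fun a b hab =>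
    div_le_div_of_nonneg_right (by exact_mod_cast hab) n.cast_nonneg
  set Δ : Fin n → Ω → ℝ := fun i ω => W (ts (i + 1)) ω - W (ts i) ω
  have hΔ : ∀ i, Measurable (Δ i) := fun i => (hmeas _).sub (hmeas _)
  have hlaw : ∀ i, P.map (Δ i) = gaussianReal 0 ((n : ℝ)⁻¹).toNNReal := by
    intro i
    have hn : (0 : ℝ) < n := by exact_mod_cast i.pos
    convert hinc (ts i) (ts (i + 1)) (by positivity)
      (div_lt_div_of_pos_right (by push_cast; linarith) hn) using 3
    simp only [ts]; push_cast; field_simp; ring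
  have hsum : (fun ω => gridSample n (W · ω)) =ᵐ[P] Fin.partialSum ∘ fun ω i => Δ i ω := by
    filter_upwards [hae] with ω hω
    conv_lhs => rw [← Fin.partialSum_left_neg (gridSample n (W · ω))]
    ext k
    simp [gridSample, Δ, ts, hω.1, neg_add_eq_sub]
  rw [Measure.map_congr hsum, ← Measure.map_map (measurable_partialSum n)
    (measurable_pi_lambda _ hΔ), (hind n ts hts (by simp [ts])).map_fun_eq_pi_map
    fun i => (hΔ i).aemeasurable]
  simp_rw [hlaw]

lemma ae_continuous (hW : IsStandardBrownianMotion P W) : ∀ᵐ ω ∂P, Continuous (W · ω) :=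
  hW.2.1.mono fun _ hω => hω.2

lemma measurable_gridSample (hW : IsStandardBrownianMotion P W) (n : ℕ) :
    Measurable fun ω => gridSample n (W · ω) :=
  measurable_pi_lambda _ fun _ => hW.1 _

variable {E : Type*} [TopologicalSpace E] [TopologicalSpace.PseudoMetrizableSpace E]
  [MeasurableSpace E] [BorelSpace E] {Φ : (ℝ → ℝ) → E}

theorem aemeasurable_comp (hW : IsStandardBrownianMotion P W) (hΦ : IsGridLimit Φ) :
    AEMeasurable (fun ω => Φ (W · ω)) P := by
  obtain ⟨Φn, hΦn, hlim⟩ := hΦ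
  refine aemeasurable_of_tendsto_metrizable_ae atTop
    (fun n => ((hΦn n).comp (hW.measurable_gridSample n)).aemeasurable) ?_
  filter_upwards [hW.ae_continuous] with ω hω using hlim _ hω

theorem tendstoInDistribution_gridSample [IsProbabilityMeasure P]
    (hW : IsStandardBrownianMotion P W) {Φn : ∀ n : ℕ, (Fin (n + 1) → ℝ) → E}
    (hΦn : ∀ n, Measurable (Φn n))
    (hlim : ∀ x, Continuous x → Tendsto (fun n => Φn n (gridSample n x)) atTop (𝓝 (Φ x))) :
    TendstoInDistribution (fun n ω => Φn n (gridSample n (W · ω))) atTop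
      (fun ω => Φ (W · ω)) (fun _ => P) P :=
  tendstoInDistribution_of_ae_tendsto
    (fun n => ((hΦn n).comp (hW.measurable_gridSample n)).aemeasurable)
    (hW.aemeasurable_comp ⟨Φn, hΦn, hlim⟩)
    (by filter_upwards [hW.ae_continuous] with ω hω using hlim _ hω)

theorem map_comp_eq [IsProbabilityMeasure P] [IsProbabilityMeasure Q]
    (hX : IsStandardBrownianMotion P X) (hY : IsStandardBrownianMotion Q Y) (hΦ : IsGridLimit Φ) :
    P.map (fun ω => Φ (X · ω)) = Q.map (fun ω => Φ (Y · ω)) := by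
  obtain ⟨Φn, hΦn, hlim⟩ := hΦ
  have hXconv := hX.tendstoInDistribution_gridSample hΦn hlim
  have hYconv := hY.tendstoInDistribution_gridSample hΦn hlim
  refine tendstoInDistribution_unique _ hXconv
    { forall_aemeasurable := hXconv.forall_aemeasurable
      aemeasurable_limit := hYconv.aemeasurable_limit
      tendsto := ?_ }
  have hlaw : ∀ n, P.map (fun ω => Φn n (gridSample n (X · ω)))
      = Q.map (fun ω => Φn n (gridSample n (Y · ω))) := fun n => by
    rw [← Function.comp_def (Φn n), ← Measure.map_map (hΦn n) (hX.measurable_gridSample n),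
      hX.map_gridSample, ← hY.map_gridSample, Measure.map_map (hΦn n) (hY.measurable_gridSample n)]
    rfl
  exact hYconv.tendsto.congr fun n => Subtype.ext (hlaw n).symm

theorem rescale (hW : IsStandardBrownianMotion P W) {T : ℝ} (hT : 0 < T) :
    IsStandardBrownianMotion P (fun u ω => pathRescale T (W · ω) u) := by
  obtain ⟨hmeas, hae, hinc, hind⟩ := hW
  refine ⟨fun t => (hmeas _).div_const _, ?_, fun s t hs hst => ?_, fun n ts hts hts0 => ?_⟩
  · filter_upwards [hae] with ω hω
    exact ⟨by simp [pathRescale, hω.1], (hω.2.comp (continuous_mul_const T)).div_const _⟩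
  · have hlaw := hinc (s * T) (t * T) (by positivity) (mul_lt_mul_of_pos_right hst hT)
    have hcomp : (fun ω => pathRescale T (W · ω) t - pathRescale T (W · ω) s)
        = (fun y => (√T)⁻¹ * y) ∘ fun ω => W (t * T) ω - W (s * T) ω := by
      funext ω; simp only [pathRescale, Function.comp_apply]; ring
    rw [hcomp, ← Measure.map_map (f := fun ω => W (t * T) ω - W (s * T) ω)
      (measurable_const_mul _) ((hmeas _).sub (hmeas _)), hlaw, gaussianReal_map_const_mul,
      mul_zero]
    congr 1
    ext
    simp only [NNReal.coe_mul, NNReal.coe_mk, Real.coe_toNNReal', inv_pow, sq_sqrt hT.le]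
    rw [← sub_mul, max_eq_left (by nlinarith), max_eq_left (by linarith)]
    field_simp
  · convert (hind n (fun k => ts k * T) (fun a b hab => mul_le_mul_of_nonneg_right (hts hab) hT.le)
      (mul_nonneg hts0 hT.le)).comp (fun _ y => y / √T) (fun _ => measurable_id.div_const _)
      using 1
    funext i ω
    simp [pathRescale, sub_div]

theorem integral_comp_eq [IsProbabilityMeasure P] [IsProbabilityMeasure Q]
    (hX : IsStandardBrownianMotion P X) (hY : IsStandardBrownianMotion Q Y) (hΦ : IsGridLimit Φ)
    {f : E → ℝ} (hf : Measurable f) :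
    ∫ ω, f (Φ (X · ω)) ∂P = ∫ ω, f (Φ (Y · ω)) ∂Q := by
  rw [← integral_map (hX.aemeasurable_comp hΦ) hf.aestronglyMeasurable,
    ← integral_map (hY.aemeasurable_comp hΦ) hf.aestronglyMeasurable, hX.map_comp_eq hY hΦ]

end IsStandardBrownianMotion

noncomputable def cltVector (p q t : ℝ) (x : ℝ → ℝ) : ℝ × ℝ × ℝ :=
  ((1/2) * log (∫ s in (0:ℝ)..t, exp (2 * p * x s)) / √t,
    (1/2) * log (∫ s in (0:ℝ)..t, exp (2 * -q * x s)) / √t,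
    x t / √t)

noncomputable def softMaxVector (p q T : ℝ) (y : ℝ → ℝ) : ℝ × ℝ × ℝ :=
  (log T / (2 * √T) + p * softMax (2 * p * √T) y,
    log T / (2 * √T) + -q * softMax (2 * -q * √T) y,
    y 1)

lemma half_log_integral_exp_div_sqrt_eq {x : ℝ → ℝ} (hx : Continuous x) {T : ℝ} (hT : 0 < T)
    (α : ℝ) : (1/2) * log (∫ s in (0:ℝ)..T, exp (2 * α * x s)) / √T
      = log T / (2 * √T) + α * softMax (2 * α * √T) (pathRescale T x) := by
  have hsub : ∫ s in (0:ℝ)..T, exp (2 * α * x s)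
      = T * ∫ u in (0:ℝ)..1, exp (2 * α * √T * pathRescale T x u) := by
    have harg : ∀ u, 2 * α * √T * pathRescale T x u = 2 * α * x (u * T) := fun u => by
      simp only [pathRescale]; field_simp
    simp_rw [harg]
    rw [intervalIntegral.integral_comp_mul_right (fun s => exp (2 * α * x s)) hT.ne', zero_mul,
      one_mul, smul_eq_mul, mul_inv_cancel_left₀ hT.ne']
  have hcont : Continuous (pathRescale T x) := (hx.comp (continuous_mul_const T)).div_const _
  have hpos := integral_exp_mul_pos hcont.continuousOn (2 * α * √T)
  rw [hsub, log_mul hT.ne' hpos.ne', softMax]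
  rcases eq_or_ne α 0 with rfl | hα
  · simp only [mul_zero, zero_mul, exp_zero, intervalIntegral.integral_const, sub_zero,
      smul_eq_mul, mul_one, log_one, add_zero, div_zero]
    ring
  · field_simp

lemma cltVector_eq_softMaxVector {x : ℝ → ℝ} (hx : Continuous x) {T : ℝ} (hT : 0 < T)
    (p q : ℝ) : cltVector p q T x = softMaxVector p q T (pathRescale T x) := by
  simp only [cltVector, softMaxVector, half_log_integral_exp_div_sqrt_eq hx hT, pathRescale,
    one_mul]

lemma isGridLimit_softMaxVector (p q T : ℝ) : IsGridLimit (softMaxVector p q T) := by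
  have hcoord : ∀ α, IsGridLimit fun y => log T / (2 * √T) + α * softMax (2 * α * √T) y :=
    fun α => (isGridLimit_softMax _).comp_continuous
      (by fun_prop : Continuous fun v => log T / (2 * √T) + α * v)
  exact (hcoord p).prodMk ((hcoord (-q)).prodMk isGridLimit_eval_one)

lemma tendsto_log_div_two_sqrt : Tendsto (fun T => log T / (2 * √T)) atTop (𝓝 0) := by
  have h := ((isLittleO_log_rpow_atTop one_half_pos).tendsto_div_nhds_zero).div_const 2
  rw [zero_div] at h
  refine h.congr' ?_
  filter_upwards [eventually_ge_atTop 0] with T hT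
  rw [sqrt_eq_rpow, div_div, mul_comm]

theorem tendsto_softMaxVector {p q : ℝ} (hp : 0 < p) (hq : 0 < q) {x : ℝ → ℝ}
    (hx : Continuous x) :
    Tendsto (fun T => softMaxVector p q T x) atTop
      (𝓝 (p * sSup (x '' Icc 0 1), -q * sInf (x '' Icc 0 1), x 1)) := by
  have hmax := (tendsto_softMax_atTop hx).comp
    (tendsto_sqrt_atTop.const_mul_atTop (by positivity : 0 < 2 * p))
  have hmin := (tendsto_softMax_atBot hx).comp
    (tendsto_sqrt_atTop.const_mul_atTop_of_neg (by linarith : 2 * -q < 0))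
  have h := (tendsto_log_div_two_sqrt.add (hmax.const_mul p)).prodMk_nhds
    ((tendsto_log_div_two_sqrt.add (hmin.const_mul (-q))).prodMk_nhds
      (tendsto_const_nhds (x := x 1)))
  rw [zero_add, zero_add] at h
  exact h

theorem tendsto_integral_softMaxVector {Ω : Type*} [MeasurableSpace Ω] {P : Measure Ω}
    [IsProbabilityMeasure P] {W : ℝ → Ω → ℝ} (hW : IsStandardBrownianMotion P W) {p q : ℝ}
    (hp : 0 < p) (hq : 0 < q) (f : BoundedContinuousFunction (ℝ × ℝ × ℝ) ℝ) :
    Tendsto (fun T => ∫ ω, f (softMaxVector p q T (W · ω)) ∂P) atTop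
      (𝓝 (∫ ω, f (p * sSup ((W · ω) '' Icc 0 1), -q * sInf ((W · ω) '' Icc 0 1), W 1 ω) ∂P)) :=
  tendsto_integral_filter_of_dominated_convergence (fun _ => ‖f‖)
    (.of_forall fun T => f.continuous.measurable.comp_aemeasurable
      (hW.aemeasurable_comp (isGridLimit_softMaxVector p q T)) |>.aestronglyMeasurable)
    (.of_forall fun _ => .of_forall fun _ => f.norm_coe_le_norm _) (integrable_const _)
    (by filter_upwards [hW.ae_continuous] with ω hω using
      (f.continuous.tendsto _).comp (tendsto_softMaxVector hp hq hω))

/-- Central limit theorem, driftless case: the normalized vector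
`(1/√t)((1/2)log V_t(p), (1/2)log V_t(−q), W_t)` converges in distribution (tested
against bounded continuous functions) to
`(p·max_{[0,1]} W, −q·min_{[0,1]} W, W₁)`. -/
theorem clt_driftless {Ω : Type*} [MeasurableSpace Ω] (P : Measure Ω)
    [IsProbabilityMeasure P] (W : ℝ → Ω → ℝ) (hW : IsStandardBrownianMotion P W)
    (p q : ℝ) (hp : 0 < p) (hq : 0 < q) :
    ∀ f : BoundedContinuousFunction (ℝ × ℝ × ℝ) ℝ,
      Tendsto (fun t : ℝ =>
          ∫ ω, f (((1/2) * Real.log (quadVar W p t ω)) / Real.sqrt t,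
                  ((1/2) * Real.log (quadVar W (-q) t ω)) / Real.sqrt t,
                  W t ω / Real.sqrt t) ∂P)
        atTop
        (nhds (∫ ω, f (p * sSup ((fun s => W s ω) '' Set.Icc (0:ℝ) 1),
                       -q * sInf ((fun s => W s ω) '' Set.Icc (0:ℝ) 1),
                       W 1 ω) ∂P)) := by
  intro f
  refine (tendsto_integral_softMaxVector hW hp hq f).congr' ?_
  filter_upwards [eventually_gt_atTop 0] with T hT
  rw [← (hW.rescale hT).integral_comp_eq hW (isGridLimit_softMaxVector p q T)
    f.continuous.measurable]
  refine integral_congr_ae ?_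
  filter_upwards [hW.ae_continuous] with ω hω
  exact congrArg f (cltVector_eq_softMaxVector hω hT p q).symm
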